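/- Let G be a finite group, p a prime, S ∈ Syl_p(G), and P ≤ S. Then P satisfies |N_S(P)| ≥ |N_S(Q)| for every Q ≤ S which is G-conjugate to P if and only if N_S(P) is a Sylow p-subgroup of N_G(P). -/

import Mathlib

/-!
Let `N = N_G(P)` and let `T` be a Sylow `p`-subgroup of `N`. Conjugating by `g⁻¹` embeds
`N_S(gPg⁻¹)` into `N` as a `p`-subgroup, so `|N_S(Q)| ≤ |T|` for every conjugate `Q` of `P`.
Conversely `P ⊴ N` is a `p`-group, hence `P ≤ T`; conjugating `T` into `S` by some `g` gives
`gTg⁻¹ ≤ N_S(gPg⁻¹)` with `gPg⁻¹ ≤ S`. So the maximum of `|N_S(Q)|` over conjugates `Q ≤ S` is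
`|T|`, and the `p`-subgroup `N_S(P)` of `N` is Sylow exactly when it has this order.
-/

/-- The conjugate subgroup `g P g⁻¹`. -/
def conjBy {G : Type*} [Group G] (g : G) (P : Subgroup G) : Subgroup G :=
  P.map (MulAut.conj g).toMonoidHom

open scoped Pointwise

namespace Subgroup

variable {G : Type*} [Group G]

theorem card_pointwise_smul {α : Type*} [Group α] [MulDistribMulAction α G] (a : α)
    (H : Subgroup G) : Nat.card ↥(a • H) = Nat.card H :=
  (Nat.card_congr (equivSMul a H).toEquiv).symm

theorem normalizer_conj_smul (g : G) (H : Subgroup G) :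
    normalizer ((MulAut.conj g • H : Subgroup G) : Set G) = MulAut.conj g • normalizer (H : Set G) :=
  (map_equiv_normalizer_eq H (MulAut.conj g)).symm

theorem card_subgroupOf_of_le {H K : Subgroup G} (h : H ≤ K) :
    Nat.card (H.subgroupOf K) = Nat.card H :=
  Nat.card_congr (subgroupOfEquivOfLe h).toEquiv

end Subgroup

theorem conjBy_eq_smul {G : Type*} [Group G] (g : G) (P : Subgroup G) :
    conjBy g P = MulAut.conj g • P :=
  rfl

open Subgroup

section Sylow

variable {p : ℕ} {G : Type*} [Group G]

theorem IsPGroup.exists_conj_smul_le [Fact p.Prime] [Finite (Sylow p G)] {H : Subgroup G}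
    (hH : IsPGroup p H) (S : Sylow p G) :
    ∃ g : G, MulAut.conj g • H ≤ S := by
  obtain ⟨S', hS'⟩ := hH.exists_le_sylow
  obtain ⟨g, hg⟩ := MulAction.exists_smul_eq G S' S
  refine ⟨g, ?_⟩
  rw [← hg, Sylow.coe_subgroup_smul]
  exact pointwise_smul_le_pointwise_smul_iff.mpr hS'

variable [Finite G] [Fact p.Prime]

theorem Sylow.card_le_of_isPGroup (T : Sylow p G) {H : Subgroup G} (hH : IsPGroup p H) :
    Nat.card H ≤ Nat.card T := by
  obtain ⟨T', hT'⟩ := hH.exists_le_sylow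
  rw [T.card_eq_multiplicity, ← T'.card_eq_multiplicity]
  exact card_le_of_le hT'

theorem IsPGroup.exists_sylow_eq_iff {H : Subgroup G} (hH : IsPGroup p H) (T : Sylow p G) :
    (∃ T' : Sylow p G, (T' : Subgroup G) = H) ↔ Nat.card T ≤ Nat.card H := by
  constructor
  · rintro ⟨T', rfl⟩
    rw [T.card_eq_multiplicity, T'.card_eq_multiplicity]
  · intro h
    obtain ⟨T', hT'⟩ := hH.exists_le_sylow
    refine ⟨T', (eq_of_le_of_card_ge hT' ?_).symm⟩
    rwa [T'.card_eq_multiplicity, ← T.card_eq_multiplicity]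

theorem Sylow.card_le_of_le {K : Subgroup G} (T : Sylow p K) {H : Subgroup G} (hH : IsPGroup p H)
    (hHK : H ≤ K) : Nat.card H ≤ Nat.card T := by
  rw [← card_subgroupOf_of_le hHK]
  exact T.card_le_of_isPGroup hH.comap_subtype

end Sylow

section FullyNormalized

variable {p : ℕ} {G : Type*} [Group G] [Finite G] [Fact p.Prime]

theorem card_inf_normalizer_conj_le (S : Sylow p G) (P : Subgroup G) (g : G)
    (T : Sylow p (normalizer (P : Set G))) :
    Nat.card ↥((S : Subgroup G) ⊓ normalizer ((MulAut.conj g • P : Subgroup G) : Set G))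
      ≤ Nat.card T := by
  set H := (S : Subgroup G) ⊓ normalizer ((MulAut.conj g • P : Subgroup G) : Set G)
  have hH : (MulAut.conj g)⁻¹ • H ≤ normalizer (P : Set G) :=
    subset_pointwise_smul_iff.mp (normalizer_conj_smul g P ▸ inf_le_right)
  rw [← card_pointwise_smul (MulAut.conj g)⁻¹ H]
  refine T.card_le_of_le ?_ hH
  rw [pointwise_smul_def]
  exact S.isPGroup'.to_inf_left.map _

theorem exists_conj_smul_le_and_card_le_card_inf_normalizer (S : Sylow p G) {P : Subgroup G}
    (hP : IsPGroup p P) (T : Sylow p (normalizer (P : Set G))) :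
    ∃ g : G, MulAut.conj g • P ≤ S ∧
      Nat.card T ≤
        Nat.card ↥((S : Subgroup G) ⊓ normalizer ((MulAut.conj g • P : Subgroup G) : Set G)) := by
  let ι := (normalizer (P : Set G)).subtype
  set H := (T : Subgroup _).map ι
  have hPH : P ≤ H := by
    have := map_mono (f := ι) (IsPGroup.le_sylow_of_normal (N := P.subgroupOf _)
      (hP.comap_subtype) T)
    rwa [subgroupOf_map_subtype, inf_eq_left.mpr le_normalizer] at this
  obtain ⟨g, hg⟩ := (T.isPGroup'.map ι).exists_conj_smul_le S
  refine ⟨g, (pointwise_smul_le_pointwise_smul_iff.mpr hPH).trans hg, ?_⟩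
  calc Nat.card T = Nat.card ↥(MulAut.conj g • H) := by rw [card_pointwise_smul, card_subtype]
    _ ≤ _ := by
      refine card_le_of_le (le_inf hg ?_)
      rw [normalizer_conj_smul]
      exact pointwise_smul_le_pointwise_smul_iff.mpr (map_subtype_le _)

end FullyNormalized

/-- For `P ≤ S ∈ Syl_p(G)`: `P` is fully normalized (i.e. `|N_S(P)| ≥ |N_S(Q)|` for every
`G`-conjugate `Q ≤ S` of `P`) if and only if `N_S(P)` is a Sylow `p`-subgroup of `N_G(P)`. -/
theorem stmt11 {p : ℕ} (hp : p.Prime) {G : Type*} [Group G] [Finite G]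
    (S : Sylow p G) (P : Subgroup G) (hP : P ≤ S) :
    (∀ g : G, conjBy g P ≤ (S : Subgroup G) →
        Nat.card ↥((S : Subgroup G) ⊓ Subgroup.normalizer (conjBy g P : Set G))
          ≤ Nat.card ↥((S : Subgroup G) ⊓ (Subgroup.normalizer (P : Set G))))
    ↔ ∃ T : Sylow p ↥(Subgroup.normalizer (P : Set G)),
        (T : Subgroup ↥(Subgroup.normalizer (P : Set G)))
          = ((S : Subgroup G) ⊓ (Subgroup.normalizer (P : Set G))).subgroupOf (Subgroup.normalizer (P : Set G)) := by
  have : Fact p.Prime := ⟨hp⟩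
  set N := normalizer (P : Set G)
  obtain ⟨T⟩ : Nonempty (Sylow p N) := inferInstance
  have hJ : IsPGroup p (((S : Subgroup G) ⊓ N).subgroupOf N) :=
    S.isPGroup'.to_inf_left.comap_subtype
  rw [hJ.exists_sylow_eq_iff T, card_subgroupOf_of_le inf_le_right]
  simp only [conjBy_eq_smul]
  constructor
  · intro h
    obtain ⟨g, hgS, hT⟩ :=
      exists_conj_smul_le_and_card_le_card_inf_normalizer S (S.isPGroup'.to_le hP) T
    exact hT.trans (h g hgS)
  · exact fun h g _ => (card_inf_normalizer_conj_le S P g T).trans h
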